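/- Let T be a positive bounded operator on A²_ρ with Berezin transform T̃(z) = ⟨T k_z, k_z⟩, and let p ≥ 1. If T belongs to the Schatten class S_p, then ∫_{𝔹_n} T̃(z)^p dλ_ρ(z) < ∞, where dλ_ρ(z) = 2^k ρ(z)(1-|z|)^{-n} dv(z) for z ∈ Ω_k. -/

import Mathlib

/-!
`T̃(z) = ⟨T k_z, k_z⟩` is a vector state applied to `T`, so Jensen's inequality for the convex
function `t ↦ t ^ p` gives `T̃(z) ^ p ≤ ⟨T ^ p k_z, k_z⟩`: the tangent line of `t ^ p` at `T̃(z)`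
lies below `t ^ p` on the spectrum of `T`, and the continuous functional calculus turns this into
an operator inequality. Since `‖K_z‖² ≳ 2^k (1 - |z|)^{-n}`, integrating against `ρ dv` bounds
the integral by a multiple of `∫ ⟨T ^ p K_z, K_z⟩ ρ dv = Σ_l ‖(T ^ p)^{1/2} e_l‖² = tr(T ^ p)`,
by Parseval's identity and the reproducing property of `K`.
-/

open MeasureTheory
open scoped ENNReal NNReal

noncomputable section

/-- Borel structure on `ℂⁿ` with the Euclidean norm. -/
instance (n : ℕ) : MeasurableSpace (EuclideanSpace ℂ (Fin n)) := borel _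

instance (n : ℕ) : BorelSpace (EuclideanSpace ℂ (Fin n)) := ⟨rfl⟩

/-- Lebesgue measure on `ℂⁿ` with the Euclidean norm, transported from `Fin n → ℂ`. -/
instance (n : ℕ) : MeasureSpace (EuclideanSpace ℂ (Fin n)) :=
  ⟨Measure.map (WithLp.equiv 2 (Fin n → ℂ)).symm volume⟩

lemma Real.rpow_add_mul_rpow_sub_one_mul_sub_le_rpow {a x p : ℝ} (ha : 0 < a) (hx : 0 ≤ x)
    (hp : 1 ≤ p) : a ^ p + p * a ^ (p - 1) * (x - a) ≤ x ^ p := by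
  have h := one_add_mul_self_le_rpow_one_add (s := x / a - 1)
    (by linarith [div_nonneg hx ha.le]) hp
  rw [add_sub_cancel, Real.div_rpow hx ha.le, le_div_iff₀ (by positivity)] at h
  refine le_of_eq_of_le ?_ h
  rw [Real.rpow_sub_one ha.ne']
  field_simp

lemma HilbertBasis.enorm_sq_eq_tsum_enorm_inner_sq {ι 𝕜 E : Type*} [RCLike 𝕜]
    [NormedAddCommGroup E] [InnerProductSpace 𝕜 E] (b : HilbertBasis ι 𝕜 E) (v : E) :
    ‖v‖ₑ ^ 2 = ∑' i, ‖inner 𝕜 (b i) v‖ₑ ^ 2 := by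
  have h := lp.hasSum_norm (p := 2) (by norm_num) (b.repr v)
  simp only [b.repr_apply_apply, LinearIsometryEquiv.norm_map, ENNReal.toReal_ofNat,
    Real.rpow_two] at h
  simp only [← ofReal_norm, ← ENNReal.ofReal_pow (norm_nonneg _)]
  rw [← h.tsum_eq, ENNReal.ofReal_tsum_of_nonneg (fun _ => by positivity) h.summable]

section ReproducingKernel

variable {X 𝕜 E F : Type*} [MeasurableSpace X] {μ : Measure X} [RCLike 𝕜]
  [NormedAddCommGroup E] [InnerProductSpace 𝕜 E] [CompleteSpace E]
  [NormedAddCommGroup F] [InnerProductSpace 𝕜 F] [CompleteSpace F]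

theorem lintegral_enorm_apply_kernel_sq_eq_tsum {K : X → E}
    (hK_meas : ∀ f, AEMeasurable (fun z => inner 𝕜 (K z) f) μ)
    (hK_norm : ∀ f, ∫⁻ z, ‖inner 𝕜 (K z) f‖ₑ ^ 2 ∂μ = ‖f‖ₑ ^ 2)
    (A : E →L[𝕜] F) {ι : Type*} [Countable ι] (b : HilbertBasis ι 𝕜 F) :
    ∫⁻ z, ‖A (K z)‖ₑ ^ 2 ∂μ = ∑' i, ‖ContinuousLinearMap.adjoint A (b i)‖ₑ ^ 2 := by
  calc ∫⁻ z, ‖A (K z)‖ₑ ^ 2 ∂μ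
      = ∫⁻ z, ∑' i, ‖inner 𝕜 (K z) (ContinuousLinearMap.adjoint A (b i))‖ₑ ^ 2 ∂μ := by
        refine lintegral_congr fun z => ?_
        rw [b.enorm_sq_eq_tsum_enorm_inner_sq]
        refine tsum_congr fun i => ?_
        rw [ContinuousLinearMap.adjoint_inner_right, ← ofReal_norm, ← ofReal_norm,
          norm_inner_symm]
    _ = ∑' i, ∫⁻ z, ‖inner 𝕜 (K z) (ContinuousLinearMap.adjoint A (b i))‖ₑ ^ 2 ∂μ :=
        lintegral_tsum fun i => (hK_meas _).enorm.pow_const 2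
    _ = _ := tsum_congr fun i => hK_norm _

end ReproducingKernel

namespace ContinuousLinearMap

variable {H : Type*} [NormedAddCommGroup H] [InnerProductSpace ℂ H]

def berezin (T : H →L[ℂ] H) (x : H) : ℝ :=
  (inner ℂ ((‖x‖⁻¹ : ℝ) • x) (T ((‖x‖⁻¹ : ℝ) • x))).re

lemma re_inner_le_re_inner_of_le {A B : H →L[ℂ] H} (h : A ≤ B) (u : H) :
    (inner ℂ u (A u)).re ≤ (inner ℂ u (B u)).re := by
  have := ((le_def A B).1 h).re_inner_nonneg_right u
  rw [sub_apply, inner_sub_right, map_sub] at this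
  simpa using this

variable [CompleteSpace H]

/-- Jensen's inequality for the spectral measure of `T` in the state `u`, for a function with a
supporting line at the mean `⟪u, T u⟫`. -/
lemma le_re_inner_cfc_of_affine_le {T : H →L[ℂ] H} (hT : IsSelfAdjoint T)
    {u : H} (hu : ‖u‖ = 1) {f : ℝ → ℝ} (hf : ContinuousOn f (spectrum ℝ T)) {m : ℝ}
    (hfm : ∀ x ∈ spectrum ℝ T,
      f (inner ℂ u (T u)).re + m * (x - (inner ℂ u (T u)).re) ≤ f x) :
    f (inner ℂ u (T u)).re ≤ (inner ℂ u (cfc f T u)).re := by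
  set a := (inner ℂ u (T u)).re
  have hle : cfc (fun x => f a + m * (x - a)) T ≤ cfc f T := cfc_mono hfm
  have haff : cfc (fun x => f a + m * (x - a)) T = algebraMap ℝ _ (f a - m * a) + m • T := by
    have : (fun x => f a + m * (x - a)) = fun x => (f a - m * a) + m * x := by ext; ring
    rw [this, cfc_add .., cfc_const .., cfc_const_mul_id ..]
  calc f a = (inner ℂ u (cfc (fun x => f a + m * (x - a)) T u)).re := by
        simp [haff, Algebra.algebraMap_eq_smul_one, hu, a]
    _ ≤ _ := re_inner_le_re_inner_of_le hle u

lemma re_inner_rpow_le_re_inner_rpow {T : H →L[ℂ] H} (hT : 0 ≤ T) {p : ℝ} (hp : 1 ≤ p)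
    {u : H} (hu : ‖u‖ = 1) :
    (inner ℂ u (T u)).re ^ p ≤ (inner ℂ u ((T ^ p) u)).re := by
  have ha : 0 ≤ (inner ℂ u (T u)).re := ((nonneg_iff_isPositive T).1 hT).re_inner_nonneg_right u
  rcases ha.eq_or_lt with ha | ha
  · rw [← ha, Real.zero_rpow (by linarith)]
    exact ((nonneg_iff_isPositive _).1 (CFC.rpow_nonneg (a := T) (y := p))).re_inner_nonneg_right u
  rw [CFC.rpow_eq_cfc_real hT]
  exact le_re_inner_cfc_of_affine_le (IsSelfAdjoint.of_nonneg hT) hu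
    (Real.continuous_rpow_const (by linarith)).continuousOn fun x hx =>
      Real.rpow_add_mul_rpow_sub_one_mul_sub_le_rpow ha (spectrum_nonneg_of_nonneg hT hx) hp

lemma berezin_rpow_mul_norm_sq_le {T : H →L[ℂ] H} (hT : 0 ≤ T) {p : ℝ} (hp : 1 ≤ p) (x : H) :
    T.berezin x ^ p * ‖x‖ ^ 2 ≤ (inner ℂ x ((T ^ p) x)).re := by
  rcases eq_or_ne x 0 with rfl | hx
  · simp
  have hx' : ‖x‖ ≠ 0 := norm_ne_zero_iff.2 hx
  have hu : ‖(‖x‖⁻¹ : ℝ) • x‖ = 1 := by simp [norm_smul, hx']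
  calc T.berezin x ^ p * ‖x‖ ^ 2
      ≤ (inner ℂ ((‖x‖⁻¹ : ℝ) • x) ((T ^ p) ((‖x‖⁻¹ : ℝ) • x))).re * ‖x‖ ^ 2 := by
        gcongr
        exact re_inner_rpow_le_re_inner_rpow hT hp hu
    _ = (inner ℂ x ((T ^ p) x)).re := by
        simp [RCLike.real_smul_eq_coe_smul (K := ℂ)]
        field_simp

lemma berezin_rpow_mul_le {T : H →L[ℂ] H} (hT : 0 ≤ T) {p : ℝ} (hp : 1 ≤ p) {x : H}
    {c D : ℝ} (hc : 0 < c) (hD : c * D ≤ ‖x‖ ^ 2) :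
    T.berezin x ^ p * D ≤ c⁻¹ * (inner ℂ x ((T ^ p) x)).re := by
  have hB : 0 ≤ T.berezin x ^ p :=
    Real.rpow_nonneg (((nonneg_iff_isPositive T).1 hT).re_inner_nonneg_right _) p
  calc T.berezin x ^ p * D = c⁻¹ * (T.berezin x ^ p * (c * D)) := by field_simp
    _ ≤ c⁻¹ * (T.berezin x ^ p * ‖x‖ ^ 2) := by gcongr
    _ ≤ c⁻¹ * (inner ℂ x ((T ^ p) x)).re := by gcongr; exact berezin_rpow_mul_norm_sq_le hT hp x

lemma re_inner_apply_eq_norm_sqrt_apply_sq {S : H →L[ℂ] H} (hS : 0 ≤ S) (x : H) :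
    (inner ℂ x (S x)).re = ‖CFC.sqrt S x‖ ^ 2 := by
  have hQ : adjoint (CFC.sqrt S) = CFC.sqrt S :=
    (IsSelfAdjoint.of_nonneg (CFC.sqrt_nonneg S)).adjoint_eq
  rw [apply_norm_sq_eq_inner_adjoint_right, hQ, ← mul_def, CFC.sqrt_mul_sqrt_self S hS]
  rfl

theorem lintegral_re_inner_kernel_eq_tsum {X : Type*} [MeasurableSpace X] {μ : Measure X}
    {K : X → H} (hK_meas : ∀ f, AEMeasurable (fun z => inner ℂ (K z) f) μ)
    (hK_norm : ∀ f, ∫⁻ z, ‖inner ℂ (K z) f‖ₑ ^ 2 ∂μ = ‖f‖ₑ ^ 2)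
    {S : H →L[ℂ] H} (hS : 0 ≤ S) {ι : Type*} [Countable ι] (b : HilbertBasis ι ℂ H) :
    ∫⁻ z, ENNReal.ofReal (inner ℂ (K z) (S (K z))).re ∂μ
      = ∑' i, ENNReal.ofReal (inner ℂ (b i) (S (b i))).re := by
  have hQ : adjoint (CFC.sqrt S) = CFC.sqrt S :=
    (IsSelfAdjoint.of_nonneg (CFC.sqrt_nonneg S)).adjoint_eq
  simp only [re_inner_apply_eq_norm_sqrt_apply_sq hS, ENNReal.ofReal_pow (norm_nonneg _),
    ofReal_norm]
  rw [lintegral_enorm_apply_kernel_sq_eq_tsum hK_meas hK_norm _ b, hQ]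

end ContinuousLinearMap

open ContinuousLinearMap

theorem stmt16_general (n : ℕ) (ρ : ℝ → ℝ) (hρ : Measurable ρ)
    (hρpos : ∀ x ∈ Set.Ico (0:ℝ) 1, 0 < ρ x)
    (κ : EuclideanSpace ℂ (Fin n) → ℕ)
    (H : Type*) [NormedAddCommGroup H] [InnerProductSpace ℂ H] [CompleteSpace H]
    (ι : H →ₗ[ℂ] EuclideanSpace ℂ (Fin n) → ℂ)
    (K : EuclideanSpace ℂ (Fin n) → H)
    (hKcont : Continuous K)
    (hrep : ∀ (f : H), ∀ z ∈ Metric.ball (0 : EuclideanSpace ℂ (Fin n)) 1,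
      ι f z = (inner ℂ (K z) f : ℂ))
    (hnorm : ∀ f : H,
      ∫⁻ z in Metric.ball (0 : EuclideanSpace ℂ (Fin n)) 1,
        (‖ι f z‖₊ : ℝ≥0∞) ^ 2 * ENNReal.ofReal (ρ ‖z‖) ∂volume = (‖f‖₊ : ℝ≥0∞) ^ 2)
    (hKsize : ∃ c > (0:ℝ), ∃ C > (0:ℝ),
      ∀ z ∈ Metric.ball (0 : EuclideanSpace ℂ (Fin n)) 1,
        c * (2:ℝ) ^ (κ z) / (1 - ‖z‖) ^ n ≤ ‖K z‖ ^ 2 ∧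
        ‖K z‖ ^ 2 ≤ C * (2:ℝ) ^ (κ z) / (1 - ‖z‖) ^ n)
    (T : H →L[ℂ] H) (hT : T.IsPositive) (p : ℝ) (hp : 1 ≤ p)
    (e : HilbertBasis ℕ ℂ H)
    (hmem : ∑' l : ℕ, ENNReal.ofReal ((inner ℂ (e l) (CFC.rpow T p (e l)) : ℂ).re) < ⊤) :
    ∫⁻ z in Metric.ball (0 : EuclideanSpace ℂ (Fin n)) 1,
      ENNReal.ofReal
        (((inner ℂ ((‖K z‖⁻¹ : ℝ) • K z) (T ((‖K z‖⁻¹ : ℝ) • K z)) : ℂ).re) ^ p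
          * (2:ℝ) ^ (κ z) * ρ ‖z‖ / (1 - ‖z‖) ^ n) ∂volume < ⊤ := by
  obtain ⟨c, hc, _, -, hK_lower⟩ := hKsize
  have hT0 : 0 ≤ T := (nonneg_iff_isPositive T).2 hT
  set w : EuclideanSpace ℂ (Fin n) → ℝ≥0∞ := fun z => ENNReal.ofReal (ρ ‖z‖)
  set μ := (volume.restrict (Metric.ball (0 : EuclideanSpace ℂ (Fin n)) 1)).withDensity w
  have hμ (g : EuclideanSpace ℂ (Fin n) → ℝ≥0∞) :
      ∫⁻ z, g z ∂μ = ∫⁻ z in Metric.ball 0 1, w z * g z :=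
    lintegral_withDensity_eq_lintegral_mul_non_measurable _
      (hρ.comp measurable_norm).ennreal_ofReal (ae_of_all _ fun _ => ENNReal.ofReal_lt_top) g
  have hK_meas (f : H) : AEMeasurable (fun z => inner ℂ (K z) f) μ :=
    (hKcont.inner continuous_const).measurable.aemeasurable
  have hK_norm (f : H) : ∫⁻ z, ‖inner ℂ (K z) f‖ₑ ^ 2 ∂μ = ‖f‖ₑ ^ 2 := by
    rw [hμ, enorm_eq_nnnorm, ← hnorm f]
    refine setLIntegral_congr_fun measurableSet_ball fun z hz => ?_
    rw [hrep f z hz, mul_comm, enorm_eq_nnnorm]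
  have hpt : ∀ z ∈ Metric.ball (0 : EuclideanSpace ℂ (Fin n)) 1,
      ENNReal.ofReal (T.berezin (K z) ^ p * (2:ℝ) ^ (κ z) * ρ ‖z‖ / (1 - ‖z‖) ^ n)
        ≤ ENNReal.ofReal c⁻¹ * (w z * ENNReal.ofReal (inner ℂ (K z) ((T ^ p) (K z))).re) := by
    intro z hz
    have hρz : 0 ≤ ρ ‖z‖ := (hρpos _ ⟨norm_nonneg z, mem_ball_zero_iff.1 hz⟩).le
    have hD : c * ((2:ℝ) ^ (κ z) / (1 - ‖z‖) ^ n) ≤ ‖K z‖ ^ 2 := by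
      rw [← mul_div_assoc]; exact (hK_lower z hz).1
    rw [← ENNReal.ofReal_mul hρz, ← ENNReal.ofReal_mul (by positivity)]
    refine ENNReal.ofReal_le_ofReal ?_
    calc _ = ρ ‖z‖ * (T.berezin (K z) ^ p * ((2:ℝ) ^ (κ z) / (1 - ‖z‖) ^ n)) := by ring
      _ ≤ ρ ‖z‖ * (c⁻¹ * (inner ℂ (K z) ((T ^ p) (K z))).re) :=
          mul_le_mul_of_nonneg_left (berezin_rpow_mul_le hT0 hp hc hD) hρz
      _ = _ := by ring
  calc _ ≤ ∫⁻ z in Metric.ball (0 : EuclideanSpace ℂ (Fin n)) 1,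
        ENNReal.ofReal c⁻¹ * (w z * ENNReal.ofReal (inner ℂ (K z) ((T ^ p) (K z))).re) :=
        setLIntegral_mono' measurableSet_ball hpt
    _ = ENNReal.ofReal c⁻¹ * ∑' l, ENNReal.ofReal (inner ℂ (e l) ((T ^ p) (e l))).re := by
        rw [lintegral_const_mul' _ _ ENNReal.ofReal_ne_top, ← hμ,
          lintegral_re_inner_kernel_eq_tsum hK_meas hK_norm CFC.rpow_nonneg e]
    _ < ⊤ := ENNReal.mul_lt_top ENNReal.ofReal_lt_top hmem

/-- See the docstring body: Schatten class membership of a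
positive operator `T` on `A²_ρ` (ρ ∈ S, realized abstractly with kernel functions
`K z`, `‖K z‖² ≍ 2^{κ z}(1-|z|)^{-n}` on `Ω_{κ z}`) versus integrability of the
Berezin transform `T̃(z) = ⟨T k_z, k_z⟩` against `dλ_ρ(z) = 2^{κ z} ρ(|z|)(1-|z|)^{-n} dv(z)`.
Membership `T ∈ S_p` is expressed by finiteness of `tr(T^p) = Σ_l ⟨T^p e_l, e_l⟩`. -/
theorem stmt16 (n : ℕ) (hn : 0 < n) (ρ : ℝ → ℝ) (hρ : Measurable ρ)
    (hρpos : ∀ x ∈ Set.Ico (0:ℝ) 1, 0 < ρ x)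
    (r : ℕ → ℝ)
    (hr : ∀ k, r k ∈ Set.Ico (0:ℝ) 1)
    (hrk : ∀ k, ∫ x in (r k)..1, ρ x = (2:ℝ) ^ (-(k:ℝ)))
    (hS : ∃ A > (1:ℝ), ∀ k, A ≤ (1 - r k) / (1 - r (k+1)))
    (κ : EuclideanSpace ℂ (Fin n) → ℕ) (hκmeas : Measurable κ)
    (hκ : ∀ z ∈ Metric.ball (0 : EuclideanSpace ℂ (Fin n)) 1,
      r (κ z) ≤ ‖z‖ ∧ ‖z‖ < r (κ z + 1))
    (H : Type*) [NormedAddCommGroup H] [InnerProductSpace ℂ H] [CompleteSpace H]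
    (ι : H →ₗ[ℂ] EuclideanSpace ℂ (Fin n) → ℂ)
    (K : EuclideanSpace ℂ (Fin n) → H)
    (hKcont : Continuous K)
    (hKne : ∀ z ∈ Metric.ball (0 : EuclideanSpace ℂ (Fin n)) 1, K z ≠ 0)
    (hrep : ∀ (f : H), ∀ z ∈ Metric.ball (0 : EuclideanSpace ℂ (Fin n)) 1,
      ι f z = (inner ℂ (K z) f : ℂ))
    (hmeas : ∀ f : H, Measurable (ι f))
    (hnorm : ∀ f : H,
      ∫⁻ z in Metric.ball (0 : EuclideanSpace ℂ (Fin n)) 1,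
        (‖ι f z‖₊ : ℝ≥0∞) ^ 2 * ENNReal.ofReal (ρ ‖z‖) ∂volume = (‖f‖₊ : ℝ≥0∞) ^ 2)
    (hKsize : ∃ c > (0:ℝ), ∃ C > (0:ℝ),
      ∀ z ∈ Metric.ball (0 : EuclideanSpace ℂ (Fin n)) 1,
        c * (2:ℝ) ^ (κ z) / (1 - ‖z‖) ^ n ≤ ‖K z‖ ^ 2 ∧
        ‖K z‖ ^ 2 ≤ C * (2:ℝ) ^ (κ z) / (1 - ‖z‖) ^ n)
    (T : H →L[ℂ] H) (hT : T.IsPositive) (p : ℝ) (hp : 1 ≤ p)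
    (e : HilbertBasis ℕ ℂ H)
    (hmem : ∑' l : ℕ, ENNReal.ofReal ((inner ℂ (e l) (CFC.rpow T p (e l)) : ℂ).re) < ⊤) :
    ∫⁻ z in Metric.ball (0 : EuclideanSpace ℂ (Fin n)) 1,
      ENNReal.ofReal
        (((inner ℂ ((‖K z‖⁻¹ : ℝ) • K z) (T ((‖K z‖⁻¹ : ℝ) • K z)) : ℂ).re) ^ p
          * (2:ℝ) ^ (κ z) * ρ ‖z‖ / (1 - ‖z‖) ^ n) ∂volume < ⊤ :=
  stmt16_general n ρ hρ hρpos κ H ι K hKcont hrep hnorm hKsize T hT p hp e hmem
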